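/- Let C be a quantum [[n,k,d]] stabilizer code whose connectivity graph G on n vertices has no induced ε-expander subgraph on m or more vertices. Then either d ≤ 3m or k ≤ 2(c·log(n)·ε)²n, where c is a universal constant. -/

import Mathlib

open Finset

variable {V : Type*} [Fintype V] [DecidableEq V]

/-- Number of edges of `G` with one endpoint in `A` and the other in `W` (for disjoint `A`, `W`),
counted as ordered pairs, hence exactly once per edge. -/
def bdryTo (G : SimpleGraph V) [DecidableRel G.Adj] (A W : Finset V) : ℕ :=
  ((A ×ˢ W).filter fun p => G.Adj p.1 p.2).card

/-- Number of boundary edges of `A` inside the induced subgraph `G[B]`: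
edges of `G` with one endpoint in `A` and the other in `B \ A`. -/
def bdryIn (G : SimpleGraph V) [DecidableRel G.Adj] (B A : Finset V) : ℕ :=
  bdryTo G A (B \ A)

/-- The induced subgraph `G[U]` is an `ε`-expander: every `W ⊆ U` with `|W| ≤ |U|/2`
has at least `ε|W|` boundary edges inside `G[U]`. -/
def IsExpanderOn (G : SimpleGraph V) [DecidableRel G.Adj] (U : Finset V) (ε : ℝ) : Prop :=
  ∀ W ⊆ U, 2 * W.card ≤ U.card → ε * W.card ≤ (bdryIn G U W : ℝ)

/-- The symplectic form on `F_2^{2n}`, in the X/Z (symplectic) representation of `n`-qubit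
Pauli operators: two Paulis commute iff the form vanishes. -/
def sympl {n : ℕ} (a b : Fin n → ZMod 2 × ZMod 2) : ZMod 2 :=
  ∑ j, ((a j).1 * (b j).2 + (a j).2 * (b j).1)

/-- The weight of a Pauli operator in symplectic representation: the number of qubits on which
it acts nontrivially. -/
def qWeight {n : ℕ} (v : Fin n → ZMod 2 × ZMod 2) : ℕ :=
  (Finset.univ.filter fun j => v j ≠ 0).card

/-- Connectivity graph of a stabilizer code with checks `S`: qubits are vertices, two qubits are
adjacent iff some check acts nontrivially on both. -/
def qConnGraph {r n : ℕ} (S : Fin r → Fin n → ZMod 2 × ZMod 2) : SimpleGraph (Fin n) where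
  Adj u v := u ≠ v ∧ ∃ i, S i u ≠ 0 ∧ S i v ≠ 0
  symm := ⟨fun _ _ ⟨h1, i, ha, hb⟩ => ⟨h1.symm, i, hb, ha⟩⟩
  loopless := ⟨fun _ h => h.1 rfl⟩

instance {r n : ℕ} (S : Fin r → Fin n → ZMod 2 × ZMod 2) : DecidableRel (qConnGraph S).Adj :=
  fun _ _ => instDecidableAnd

/-- The stabilizer group (modulo phases) generated by the checks `S`. -/
def stabSpan {r n : ℕ} (S : Fin r → Fin n → ZMod 2 × ZMod 2) :
    Submodule (ZMod 2) (Fin n → ZMod 2 × ZMod 2) :=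
  Submodule.span (ZMod 2) (Set.range S)

/-!
Since no induced subgraph on `m` or more qubits expands, a set `U` of qubits can be split
recursively along sparse cuts; deleting the cut vertices, `ε|U|log₂|U|` of them in total, leaves
pieces of fewer than `m < d` qubits with no edges between them. Small pieces are correctable, and
non-adjacent correctable pieces stay correctable together, so the remainder is correctable.
Applied to all qubits this yields `R₁` with `|R₁| ≤ εn log₂ n` and correctable complement, and
applied to `R₁` it yields `R₂` with `R₁ \ R₂` correctable. The qubits are then covered by
two correctable sets and `R₂`, and the cleaning lemma bounds `k ≤ |R₂| ≤ ε²n log₂² n`.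
-/

open Module

namespace LinearMap.BilinForm

variable {K E : Type*} [Field K] [AddCommGroup E] [Module K E] {B : LinearMap.BilinForm K E}

lemma orthogonal_sup (X Y : Submodule K E) :
    B.orthogonal (X ⊔ Y) = B.orthogonal X ⊓ B.orthogonal Y := by
  refine le_antisymm (le_inf (orthogonal_le le_sup_left) (orthogonal_le le_sup_right)) ?_
  rintro v ⟨hX, hY⟩ w hw
  obtain ⟨x, hx, y, hy, rfl⟩ := Submodule.mem_sup.mp hw
  simp only [map_add, LinearMap.add_apply, hX x hx, hY y hy, add_zero]

/-- The cleaning lemma: for a stabilizer group `T`, a logical operator can be moved off a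
correctable set (`P` = operators supported on it) by multiplying with a stabilizer. -/
lemma orthogonal_le_orthogonal_inf_orthogonal_sup [FiniteDimensional K E] (hd : B.Nondegenerate)
    (hr : B.IsRefl) {T P : Submodule K E} (hT : T ≤ B.orthogonal T)
    (hP : B.orthogonal T ⊓ P ≤ T) :
    B.orthogonal T ≤ B.orthogonal T ⊓ B.orthogonal P ⊔ T := by
  have key : B.orthogonal (B.orthogonal T ⊓ B.orthogonal P ⊔ T) ≤ T := by
    rw [orthogonal_sup, ← orthogonal_sup T P, orthogonal_orthogonal hd hr,
      sup_inf_assoc_of_le P hT]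
    exact sup_le le_rfl (inf_comm P _ ▸ hP)
  calc B.orthogonal T ≤ B.orthogonal (B.orthogonal (B.orthogonal T ⊓ B.orthogonal P ⊔ T)) :=
        orthogonal_le key
    _ = _ := orthogonal_orthogonal hd hr _

end LinearMap.BilinForm

lemma Submodule.finrank_sup_le_of_inf_ker_le {K E F : Type*} [Field K] [AddCommGroup E]
    [Module K E] [AddCommGroup F] [Module K F] [FiniteDimensional K E] [FiniteDimensional K F]
    {M T : Submodule K E} (f : E →ₗ[K] F) (h : M ⊓ LinearMap.ker f ≤ T) :
    finrank K ↥(M ⊔ T) ≤ finrank K T + finrank K F := by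
  have hker : finrank K (LinearMap.ker (f.domRestrict M)) ≤ finrank K ↥(M ⊓ T) := by
    rw [← Submodule.finrank_map_subtype_eq, LinearMap.ker_domRestrict,
      Submodule.map_comap_subtype]
    exact Submodule.finrank_mono (le_inf inf_le_left h)
  have hrange := (f.domRestrict M).finrank_range_add_finrank_ker
  have hF := Submodule.finrank_le (LinearMap.range (f.domRestrict M))
  have := Submodule.finrank_sup_add_finrank_inf_eq M T
  omega

lemma Real.logb_two_natCast_nonneg (a : ℕ) : 0 ≤ Real.logb 2 a :=
  div_nonneg (Real.log_natCast_nonneg a) (Real.log_nonneg one_le_two)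

lemma Real.logb_two_natCast_le {a b : ℕ} (h : a ≤ b) : Real.logb 2 a ≤ Real.logb 2 b := by
  rcases Nat.eq_zero_or_pos a with rfl | ha
  · simpa using Real.logb_two_natCast_nonneg b
  · exact Real.logb_le_logb_of_le one_lt_two (by positivity) (by exact_mod_cast h)

/-- The recursion `f(u) ≤ ε w + f(w) + f(u - w)` for a cut of `u` into `w ≤ u/2` and `u - w` is
solved by `f(u) = ε u log₂ u`: the smaller side loses one bit of `log₂`. -/
lemma cut_logb_bound {ε w u : ℝ} (hε : 0 ≤ ε) (hw : 1 ≤ w) (hwu : 2 * w ≤ u) :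
    ε * w + ε * w * Real.logb 2 w + ε * (u - w) * Real.logb 2 (u - w) ≤
      ε * u * Real.logb 2 u := by
  have hsmall : Real.logb 2 w ≤ Real.logb 2 u - 1 := by
    rw [← Real.logb_self_eq_one one_lt_two, ← Real.logb_div (by linarith) two_ne_zero]
    exact Real.logb_le_logb_of_le one_lt_two (by linarith) (by linarith)
  have hlarge : Real.logb 2 (u - w) ≤ Real.logb 2 u :=
    Real.logb_le_logb_of_le one_lt_two (by linarith) (by linarith)
  calc ε * w + ε * w * Real.logb 2 w + ε * (u - w) * Real.logb 2 (u - w)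
      ≤ ε * w + ε * w * (Real.logb 2 u - 1) + ε * (u - w) * Real.logb 2 u := by
        have := mul_nonneg hε (by linarith : (0:ℝ) ≤ w)
        have := mul_nonneg hε (by linarith : (0:ℝ) ≤ u - w)
        gcongr
    _ = ε * u * Real.logb 2 u := by ring

lemma Real.logb_two_sq_le_four_mul_log_sq (x : ℝ) : Real.logb 2 x ^ 2 ≤ 4 * Real.log x ^ 2 := by
  have hlog2 : 1 / 2 < Real.log 2 := by linarith [Real.log_two_gt_d9]
  rw [Real.logb, div_pow, div_le_iff₀ (by positivity)]
  have : 1 ≤ 4 * Real.log 2 ^ 2 := by nlinarith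
  nlinarith [sq_nonneg (Real.log x)]

/-- `R` is the set of `W`-endpoints of the boundary edges of `W`. -/
lemma exists_sparse_cut {α : Type*} [DecidableEq α] (G : SimpleGraph α) [DecidableRel G.Adj]
    {U : Finset α} {ε : ℝ}
    (h : ¬ IsExpanderOn G U ε) :
    ∃ W ⊆ U, 0 < #W ∧ 2 * #W ≤ #U ∧ ∃ R : Finset α, (#R : ℝ) ≤ ε * #W ∧
      ∀ a ∈ W \ R, ∀ b ∈ U \ W, ¬ G.Adj a b := by
  simp only [IsExpanderOn, not_forall, not_le, exists_prop] at h
  obtain ⟨W, hWU, hW, hbdry⟩ := h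
  have hWpos : 0 < #W := by
    rw [Nat.pos_iff_ne_zero]
    rintro h0
    rw [h0, Nat.cast_zero, mul_zero] at hbdry
    exact hbdry.not_ge (Nat.cast_nonneg _)
  set E := (W ×ˢ (U \ W)).filter fun p => G.Adj p.1 p.2
  refine ⟨W, hWU, hWpos, hW, E.image Prod.fst, ?_, ?_⟩
  · calc (#(E.image Prod.fst) : ℝ) ≤ #E := by exact_mod_cast card_image_le
      _ ≤ ε * #W := hbdry.le
  · intro a ha b hb hab
    have hab' : (a, b) ∈ E := by simp [E, hab, (mem_sdiff.mp ha).1, hb]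
    exact (mem_sdiff.mp ha).2 (mem_image.mpr ⟨(a, b), hab', rfl⟩)

namespace StabilizerCode

variable {n r : ℕ}

lemma sympl_comm (a b : Fin n → ZMod 2 × ZMod 2) : sympl a b = sympl b a :=
  sum_congr rfl fun _ _ => by ring

lemma sympl_add_left (a a' b : Fin n → ZMod 2 × ZMod 2) :
    sympl (a + a') b = sympl a b + sympl a' b := by
  simp only [sympl, ← sum_add_distrib]
  exact sum_congr rfl fun _ _ => by simp only [Pi.add_apply, Prod.fst_add, Prod.snd_add]; ring

lemma sympl_smul_left (c : ZMod 2) (a b : Fin n → ZMod 2 × ZMod 2) :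
    sympl (c • a) b = c * sympl a b := by
  simp only [sympl, mul_sum]
  refine sum_congr rfl fun _ _ => ?_
  simp only [Pi.smul_apply, Prod.smul_fst, Prod.smul_snd, smul_eq_mul]
  ring

def symplForm (n : ℕ) : LinearMap.BilinForm (ZMod 2) (Fin n → ZMod 2 × ZMod 2) :=
  LinearMap.mk₂ (ZMod 2) sympl sympl_add_left sympl_smul_left
    (fun a b b' => by simp only [sympl_comm a, sympl_add_left])
    (fun c a b => by simp only [sympl_comm a, sympl_smul_left, smul_eq_mul])

@[simp] lemma symplForm_apply (a b : Fin n → ZMod 2 × ZMod 2) : symplForm n a b = sympl a b :=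
  rfl

lemma symplForm_isRefl : (symplForm n).IsRefl := fun a b h => by
  rwa [symplForm_apply, sympl_comm] at h

lemma sympl_eq_zero_of_disjoint_support {a b : Fin n → ZMod 2 × ZMod 2}
    (h : ∀ j, a j = 0 ∨ b j = 0) : sympl a b = 0 :=
  sum_eq_zero fun j _ => by rcases h j with h | h <;> simp [h]

lemma sympl_single (a : Fin n → ZMod 2 × ZMod 2) (j : Fin n) (p : ZMod 2 × ZMod 2) :
    sympl a (Pi.single j p) = (a j).1 * p.2 + (a j).2 * p.1 := by
  rw [sympl, sum_eq_single j (fun k _ hk => by simp [hk]) (by simp)]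
  simp

lemma eq_zero_of_sympl_single {a : Fin n → ZMod 2 × ZMod 2} {j : Fin n}
    (h : ∀ p, sympl a (Pi.single j p) = 0) : a j = 0 := by
  have h₁ := h (0, 1)
  have h₂ := h (1, 0)
  simp only [sympl_single, mul_one, mul_zero, add_zero, zero_add] at h₁ h₂
  exact Prod.ext h₁ h₂

def supported (A : Finset (Fin n)) : Submodule (ZMod 2) (Fin n → ZMod 2 × ZMod 2) where
  carrier := {v | ∀ j ∉ A, v j = 0}
  zero_mem' _ _ := rfl
  add_mem' ha hb j hj := by simp [ha j hj, hb j hj]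
  smul_mem' c _ ha j hj := by simp [ha j hj]

lemma mem_supported {A : Finset (Fin n)} {v : Fin n → ZMod 2 × ZMod 2} :
    v ∈ supported A ↔ ∀ j ∉ A, v j = 0 := Iff.rfl

lemma supported_mono {A B : Finset (Fin n)} (h : A ⊆ B) : supported A ≤ supported B :=
  fun _ hv j hj => hv j fun hA => hj (h hA)

lemma orthogonal_supported (A : Finset (Fin n)) :
    (symplForm n).orthogonal (supported A) = supported Aᶜ := by
  ext v
  simp only [LinearMap.BilinForm.mem_orthogonal_iff, symplForm_apply,
    mem_supported, mem_compl, not_not]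
  refine ⟨fun hv j hj => eq_zero_of_sympl_single fun p => ?_, fun hv w hw => ?_⟩
  · rw [sympl_comm]
    exact hv _ fun k hk => by rw [Pi.single_apply, if_neg (by rintro rfl; exact hk hj)]
  · exact sympl_eq_zero_of_disjoint_support fun j => (em (j ∈ A)).symm.imp (hw j) (hv j)

lemma symplForm_nondegenerate : (symplForm n).Nondegenerate :=
  symplForm_isRefl.nondegenerate_iff_separatingRight.mpr fun v hv => by
    have : v ∈ (symplForm n).orthogonal (supported univ) := fun w _ => hv w
    rw [orthogonal_supported, compl_univ] at this
    exact funext fun j => this j (notMem_empty j)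

/-- The normalizer of the stabilizer group; its elements outside `stabSpan S` are the nontrivial
logical operators. -/
def centralizer (S : Fin r → Fin n → ZMod 2 × ZMod 2) :
    Submodule (ZMod 2) (Fin n → ZMod 2 × ZMod 2) :=
  (symplForm n).orthogonal (stabSpan S)

lemma mem_centralizer {S : Fin r → Fin n → ZMod 2 × ZMod 2} {v : Fin n → ZMod 2 × ZMod 2} :
    v ∈ centralizer S ↔ ∀ i, sympl (S i) v = 0 := by
  change (∀ w ∈ stabSpan S, symplForm n w v = 0) ↔ _
  refine ⟨fun h i => h _ (Submodule.subset_span (Set.mem_range_self i)), fun h w hw => ?_⟩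
  have : stabSpan S ≤ LinearMap.ker ((symplForm n).flip v) :=
    Submodule.span_le.mpr (Set.range_subset_iff.mpr h)
  exact this hw

lemma stabSpan_le_centralizer {S : Fin r → Fin n → ZMod 2 × ZMod 2}
    (hS : ∀ i j, sympl (S i) (S j) = 0) : stabSpan S ≤ centralizer S :=
  Submodule.span_le.mpr (Set.range_subset_iff.mpr fun j => mem_centralizer.mpr fun i => hS i j)

lemma finrank_centralizer_add_finrank_stabSpan (S : Fin r → Fin n → ZMod 2 × ZMod 2) :
    finrank (ZMod 2) (centralizer S) + finrank (ZMod 2) (stabSpan S) = 2 * n := by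
  have h := LinearMap.BilinForm.finrank_orthogonal symplForm_nondegenerate (stabSpan S)
  have hle := Submodule.finrank_le (stabSpan S)
  have hdim : finrank (ZMod 2) (Fin n → ZMod 2 × ZMod 2) = 2 * n := by
    simp [finrank_pi_fintype, finrank_prod, mul_comm]
  rw [centralizer, h]
  omega

/-- Erasure of the qubits in `A` is correctable. -/
def IsCorrectable (S : Fin r → Fin n → ZMod 2 × ZMod 2) (A : Finset (Fin n)) : Prop :=
  centralizer S ⊓ supported A ≤ stabSpan S

lemma IsCorrectable.mono {S : Fin r → Fin n → ZMod 2 × ZMod 2} {A B : Finset (Fin n)}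
    (hB : IsCorrectable S B) (h : A ⊆ B) : IsCorrectable S A :=
  (inf_le_inf_left _ (supported_mono h)).trans hB

lemma isCorrectable_of_card_lt {S : Fin r → Fin n → ZMod 2 × ZMod 2} {d : ℕ}
    (hd : ∀ v : Fin n → ZMod 2 × ZMod 2, (∀ i, sympl (S i) v = 0) → v ∉ stabSpan S →
      d ≤ qWeight v) {A : Finset (Fin n)} (hA : #A < d) : IsCorrectable S A :=
  fun v ⟨hv, hvA⟩ => by_contra fun hvS => by
    have hweight : qWeight v ≤ #A := card_le_card fun j hj => by
      by_contra hjA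
      exact (mem_filter.mp hj).2 (hvA j hjA)
    have := hd v (mem_centralizer.mp hv) hvS
    omega

/-- Every check meets at most one of the two non-adjacent regions. -/
lemma centralizer_inf_supported_union_le {S : Fin r → Fin n → ZMod 2 × ZMod 2}
    {A B : Finset (Fin n)} (hAB : Disjoint A B)
    (hG : ∀ a ∈ A, ∀ b ∈ B, ¬ (qConnGraph S).Adj a b) :
    centralizer S ⊓ supported (A ∪ B) ≤
      centralizer S ⊓ supported A ⊔ centralizer S ⊓ supported B := by
  rintro v ⟨hv, hvAB⟩
  set a := A.piecewise v 0
  have ha : a ∈ supported A := fun j hj => A.piecewise_eq_of_notMem _ _ hj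
  have hb : v - a ∈ supported B := fun j hj => by
    by_cases hjA : j ∈ A
    · simp [a, hjA]
    · simp [a, hjA, hvAB j (by simp [hjA, hj])]
  have haN : a ∈ centralizer S := mem_centralizer.mpr fun i => by
    by_cases hi : ∀ x ∈ A, S i x = 0
    · refine sympl_eq_zero_of_disjoint_support fun j => ?_
      by_cases hj : j ∈ A
      exacts [.inl (hi j hj), .inr (ha j hj)]
    · push Not at hi
      obtain ⟨x, hxA, hx⟩ := hi
      have hvb : sympl (S i) (v - a) = 0 := sympl_eq_zero_of_disjoint_support fun j => by
        by_cases hj : j ∈ B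
        · refine .inl (not_not.mp fun hj' => hG x hxA j hj ⟨?_, i, hx, hj'⟩)
          rintro rfl
          exact disjoint_left.mp hAB hxA hj
        · exact .inr (hb j hj)
      have hsub := (symplForm n (S i)).map_sub v a
      simp only [symplForm_apply] at hsub
      linear_combination hsub - hvb + mem_centralizer.mp hv i
  have hvb : v - a ∈ centralizer S := sub_mem hv haN
  simpa using Submodule.add_mem_sup (Submodule.mem_inf.mpr ⟨haN, ha⟩)
    (Submodule.mem_inf.mpr ⟨hvb, hb⟩)

lemma IsCorrectable.union {S : Fin r → Fin n → ZMod 2 × ZMod 2} {A B : Finset (Fin n)}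
    (hA : IsCorrectable S A) (hB : IsCorrectable S B) (hAB : Disjoint A B)
    (hG : ∀ a ∈ A, ∀ b ∈ B, ¬ (qConnGraph S).Adj a b) : IsCorrectable S (A ∪ B) :=
  (centralizer_inf_supported_union_le hAB hG).trans (sup_le hA hB)

/-- Expander decomposition: split `U` recursively along sparse cuts until the pieces have fewer
than `m` qubits; `R` collects the deleted endpoints of the cut edges. -/
theorem exists_correctable_sdiff {S : Fin r → Fin n → ZMod 2 × ZMod 2} {m : ℕ} {ε : ℝ}
    (hε : 0 ≤ ε) (hexp : ¬ ∃ U : Finset (Fin n), m ≤ #U ∧ IsExpanderOn (qConnGraph S) U ε)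
    (hsmall : ∀ A : Finset (Fin n), #A < m → IsCorrectable S A) (U : Finset (Fin n)) :
    ∃ R : Finset (Fin n), (#R : ℝ) ≤ ε * #U * Real.logb 2 #U ∧ IsCorrectable S (U \ R) := by
  induction U using Finset.strongInduction with
  | H U ih =>
  by_cases hU : #U < m
  · refine ⟨∅, ?_, by simpa using hsmall U hU⟩
    simpa using mul_nonneg (mul_nonneg hε (Nat.cast_nonneg _)) (Real.logb_two_natCast_nonneg _)
  obtain ⟨W, hWU, hW, hWU2, R₀, hR₀, hcut⟩ :=
    exists_sparse_cut _ fun hU' => hexp ⟨U, not_lt.mp hU, hU'⟩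
  obtain ⟨RW, hRW, hcorrW⟩ := ih W (ssubset_of_subset_of_ne hWU (by rintro rfl; omega))
  obtain ⟨RV, hRV, hcorrV⟩ := ih (U \ W) (sdiff_ssubset hWU (card_pos.mp hW))
  refine ⟨R₀ ∪ RW ∪ RV, ?_, ?_⟩
  · have hcard : #(R₀ ∪ RW ∪ RV) ≤ #R₀ + #RW + #RV :=
      (card_union_le _ _).trans (Nat.add_le_add_right (card_union_le _ _) _)
    have hUW : (#(U \ W) : ℝ) = #U - #W := by
      rw [card_sdiff_of_subset hWU, Nat.cast_sub (card_le_card hWU)]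
    rw [hUW] at hRV
    have := cut_logb_bound hε (w := #W) (u := #U) (by exact_mod_cast hW) (by exact_mod_cast hWU2)
    calc (#(R₀ ∪ RW ∪ RV) : ℝ) ≤ #R₀ + #RW + #RV := by exact_mod_cast hcard
      _ ≤ ε * #U * Real.logb 2 #U := by linarith
  · refine ((hcorrW.mono (sdiff_subset (t := R₀))).union hcorrV ?_ ?_).mono ?_
    · exact disjoint_left.mpr fun j hj hj' =>
        (mem_sdiff.mp (mem_sdiff.mp hj').1).2 (mem_sdiff.mp (mem_sdiff.mp hj).1).1
    · intro a ha b hb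
      exact hcut a (mem_sdiff.mpr ⟨(mem_sdiff.mp (mem_sdiff.mp ha).1).1, (mem_sdiff.mp ha).2⟩) b
        (mem_sdiff.mp hb).1
    · intro j hj
      simp only [mem_sdiff, mem_union] at hj ⊢
      tauto

/-- Logical operators can be cleaned off the correctable set `A`, and those that also vanish on
`C` are supported on the correctable set `B`; so restriction to `C` is injective on logical
classes. -/
lemma finrank_centralizer_le {S : Fin r → Fin n → ZMod 2 × ZMod 2}
    (hS : ∀ i j, sympl (S i) (S j) = 0) {A B C : Finset (Fin n)} (hA : IsCorrectable S A)
    (hB : IsCorrectable S B) (hABC : A ∪ B ∪ C = univ) :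
    finrank (ZMod 2) (centralizer S) ≤ finrank (ZMod 2) (stabSpan S) + 2 * #C := by
  have hclean : centralizer S ≤ centralizer S ⊓ supported Aᶜ ⊔ stabSpan S := by
    rw [← orthogonal_supported]
    exact LinearMap.BilinForm.orthogonal_le_orthogonal_inf_orthogonal_sup symplForm_nondegenerate
      symplForm_isRefl (stabSpan_le_centralizer hS) hA
  let restrictC := LinearMap.funLeft (ZMod 2) (ZMod 2 × ZMod 2) (Subtype.val : C → Fin n)
  have hker : centralizer S ⊓ supported Aᶜ ⊓ LinearMap.ker restrictC ≤ stabSpan S := by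
    rintro v ⟨⟨hv, hvA⟩, hvC⟩
    refine hB ⟨hv, fun j hjB => ?_⟩
    have hj : j ∈ A ∪ B ∪ C := hABC ▸ mem_univ j
    rcases mem_union.mp hj with hj | hjC
    · exact hvA j (by simpa [hjB] using hj)
    · exact congr_fun (LinearMap.mem_ker.mp hvC) ⟨j, hjC⟩
  have hdimC : finrank (ZMod 2) (C → ZMod 2 × ZMod 2) = 2 * #C := by
    simp [finrank_pi_fintype, finrank_prod, mul_comm]
  calc finrank (ZMod 2) (centralizer S)
      ≤ finrank (ZMod 2) ↥(centralizer S ⊓ supported Aᶜ ⊔ stabSpan S) :=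
        Submodule.finrank_mono hclean
    _ ≤ finrank (ZMod 2) (stabSpan S) + 2 * #C :=
        hdimC ▸ Submodule.finrank_sup_le_of_inf_ker_le restrictC hker

lemma le_card_of_isCorrectable_sdiff {S : Fin r → Fin n → ZMod 2 × ZMod 2} {k : ℕ}
    (hS : ∀ i j, sympl (S i) (S j) = 0) (hk : k + finrank (ZMod 2) (stabSpan S) = n)
    {R₁ R₂ : Finset (Fin n)} (h₁ : IsCorrectable S (univ \ R₁))
    (h₂ : IsCorrectable S (R₁ \ R₂)) : k ≤ #R₂ := by
  have hcover : (univ \ R₁) ∪ (R₁ \ R₂) ∪ R₂ = univ := by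
    ext j
    simp only [mem_union, mem_sdiff, mem_univ, true_and, iff_true]
    tauto
  have := finrank_centralizer_le hS h₁ h₂ hcover
  have := finrank_centralizer_add_finrank_stabSpan S
  omega

end StabilizerCode

open StabilizerCode

/-- There is a universal constant `c` such that any quantum `[[n,k,d]]` stabilizer code whose
connectivity graph has no induced `ε`-expander subgraph on `m` or more vertices obeys `d ≤ 3m`
or `k ≤ 2(c·log(n)·ε)²n`. -/
theorem stmt9 : ∃ c : ℝ, 0 < c ∧
    ∀ (n r k d m : ℕ) (S : Fin r → Fin n → ZMod 2 × ZMod 2) (ε : ℝ), 0 ≤ ε →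
      (∀ i j, sympl (S i) (S j) = 0) →
      k + Module.finrank (ZMod 2) (stabSpan S) = n →
      (∀ v : Fin n → ZMod 2 × ZMod 2, (∀ i, sympl (S i) v = 0) → v ∉ stabSpan S →
        d ≤ qWeight v) →
      (¬ ∃ U : Finset (Fin n), m ≤ U.card ∧ IsExpanderOn (qConnGraph S) U ε) →
      (d ≤ 3 * m ∨ (k : ℝ) ≤ 2 * (c * Real.log n * ε) ^ 2 * n) := by
  refine ⟨2, two_pos, fun n r k d m S ε hε hS hk hd hexp => ?_⟩
  refine or_iff_not_imp_left.mpr fun hdm => ?_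
  have hsmall : ∀ A : Finset (Fin n), #A < m → IsCorrectable S A :=
    fun A hA => isCorrectable_of_card_lt hd (by omega)
  obtain ⟨R₁, hR₁, hcorr₁⟩ := exists_correctable_sdiff hε hexp hsmall univ
  obtain ⟨R₂, hR₂, hcorr₂⟩ := exists_correctable_sdiff hε hexp hsmall R₁
  have hkR₂ : k ≤ #R₂ := le_card_of_isCorrectable_sdiff hS hk hcorr₁ hcorr₂
  have hR₁n : (#R₁ : ℝ) ≤ ε * n * Real.logb 2 n := by simpa using hR₁
  have hlog : Real.logb 2 #R₁ ≤ Real.logb 2 n :=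
    Real.logb_two_natCast_le (by simpa using card_le_univ R₁)
  have := Real.logb_two_natCast_nonneg n
  have := Real.logb_two_natCast_nonneg #R₁
  calc (k : ℝ) ≤ #R₂ := by exact_mod_cast hkR₂
    _ ≤ ε * #R₁ * Real.logb 2 #R₁ := hR₂
    _ ≤ ε * (ε * n * Real.logb 2 n) * Real.logb 2 n := by gcongr
    _ = ε ^ 2 * n * Real.logb 2 n ^ 2 := by ring
    _ ≤ ε ^ 2 * n * (4 * Real.log n ^ 2) := by
        gcongr
        exact Real.logb_two_sq_le_four_mul_log_sq n
    _ ≤ 2 * (2 * Real.log n * ε) ^ 2 * n := by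
        have : 0 ≤ ε ^ 2 * n * Real.log n ^ 2 := by positivity
        linarith
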